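/- arXiv:1901.07170 — 3 statements merged into one kernel-verified Lean document; each statement's English description precedes it below -/
import Mathlib

section
/- Let h : ℕ → ℕ be any function and let α, β ≤ ω^ω be ordinals such that the expression α + β is in Cantor normal form (i.e., every exponent in the Cantor normal form of α is at least every exponent in the Cantor normal form of β). Then h^α(h^β(x)) = h^{α+β}(x) for all x ∈ ℕ, where (h^α)_{α≤ω^ω} is the Hardy hierarchy relative to h. -/
noncomputable section

namespace HardyCNF

open Ordinal

/-- Find the first nonzero entry of a (little-endian) coefficient list:
returns `(k, c, rest)` when the list is `replicate k 0 ++ (c+1) :: rest`. -/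
def splitNZ : List ℕ → Option (ℕ × ℕ × List ℕ)
  | [] => none
  | 0 :: t => (splitNZ t).map (fun x => (x.1 + 1, x.2))
  | (c+1) :: t => some (0, c, t)

theorem splitNZ_eq : ∀ {ℓ : List ℕ} {k c : ℕ} {r : List ℕ},
    splitNZ ℓ = some (k, c, r) → ℓ = List.replicate k 0 ++ (c+1) :: r := by
  intro ℓ
  induction ℓ with
  | nil => intro k c r h; simp [splitNZ] at h
  | cons hd t ih =>
    intro k c r h
    match hd with
    | 0 =>
      simp only [splitNZ, Option.map_eq_some_iff] at h
      obtain ⟨⟨k', c', r'⟩, hs, he⟩ := h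
      obtain ⟨h1, h2, h3⟩ : k' + 1 = k ∧ c' = c ∧ r' = r := by
        simpa using he
      subst h1 h2 h3
      simp [List.replicate_succ, ih hs]
    | c'+1 =>
      simp only [splitNZ, Option.some.injEq] at h
      obtain ⟨h1, h2, h3⟩ : (0 : ℕ) = k ∧ c' = c ∧ t = r := by simpa using h
      subst h1 h2 h3
      simp

/-- The ordinal `ω^0·c_0 + ω^1·c_1 + ⋯` denoted by a little-endian coefficient list. -/
def toOrd : List ℕ → Ordinal.{0}
  | [] => 0
  | c :: ℓ => omega0 * toOrd ℓ + c

theorem toOrd_replicate_zero_append (k : ℕ) (ℓ : List ℕ) :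
    toOrd (List.replicate k 0 ++ ℓ) = omega0 ^ (k : Ordinal) * toOrd ℓ := by
  induction k with
  | zero => simp [toOrd]
  | succ n ih =>
    rw [List.replicate_succ, List.cons_append]
    show omega0 * toOrd (List.replicate n 0 ++ ℓ) + (0:ℕ) = _
    rw [ih]
    have hcast : ((n+1 : ℕ) : Ordinal) = 1 + (n : Ordinal) := by
      have : ((1+n : ℕ) : Ordinal) = 1 + (n : Ordinal) := by push_cast; ring_nf
      rw [← this, Nat.add_comm]
    rw [hcast, opow_add, opow_one, mul_assoc]
    simp

theorem toOrd_succ_lt (c : ℕ) (ℓ : List ℕ) : toOrd (c :: ℓ) < toOrd ((c+1) :: ℓ) := by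
  show omega0 * toOrd ℓ + (c : Ordinal) < omega0 * toOrd ℓ + ((c:ℕ)+1 : ℕ)
  apply (add_lt_add_iff_left _).mpr
  push_cast
  exact lt_add_one _

theorem toOrd_limit_lt (x k c : ℕ) (r : List ℕ) :
    toOrd (List.replicate k 0 ++ (x+1) :: c :: r) <
      toOrd (0 :: (List.replicate k 0 ++ (c+1) :: r)) := by
  have h0 : toOrd (0 :: (List.replicate k 0 ++ (c+1) :: r))
      = omega0 * (omega0 ^ (k : Ordinal) * toOrd ((c+1) :: r)) := by
    show omega0 * toOrd (List.replicate k 0 ++ (c+1) :: r) + (0:ℕ) = _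
    rw [toOrd_replicate_zero_append]; simp
  have hsw : omega0 * omega0 ^ (k : Ordinal) = omega0 ^ (k : Ordinal) * omega0 := by
    have hcast : ((k+1 : ℕ) : Ordinal) = 1 + (k : Ordinal) := by
      have : ((1+k : ℕ) : Ordinal) = 1 + (k : Ordinal) := by push_cast; ring_nf
      rw [← this, Nat.add_comm]
    have h1 : omega0 * omega0 ^ (k : Ordinal) = omega0 ^ ((k+1 : ℕ) : Ordinal) := by
      rw [hcast, opow_add, opow_one]
    have h2 : omega0 ^ (k : Ordinal) * omega0 = omega0 ^ ((k+1 : ℕ) : Ordinal) := by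
      push_cast
      rw [opow_add, opow_one]
    rw [h1, h2]
  rw [h0, toOrd_replicate_zero_append, ← mul_assoc, hsw, mul_assoc]
  apply (mul_lt_mul_iff_right₀ (opow_pos (k : Ordinal) omega0_pos)).mpr
  show omega0 * toOrd (c :: r) + ((x:ℕ)+1 : ℕ) < omega0 * toOrd ((c+1) :: r)
  have hc : toOrd ((c+1) :: r) = toOrd (c :: r) + 1 := by
    show omega0 * toOrd r + ((c:ℕ)+1:ℕ) = (omega0 * toOrd r + c) + 1
    push_cast; rw [add_assoc]
  rw [hc, mul_add, mul_one]
  apply (add_lt_add_iff_left _).mpr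
  exact nat_lt_omega0 (x+1)

/-- The Hardy hierarchy `h^α` relative to `h`, for `α < ω^ω` given in Cantor normal
form by a little-endian coefficient list:  `h^0(x) = x`, `h^{α+1}(x) = h^α(h x)`,
`h^λ(x) = h^{λ(x)}(x)` with the standard fundamental sequences. -/
def hardy (h : ℕ → ℕ) : List ℕ → ℕ → ℕ
  | [], x => x
  | (c+1) :: ℓ, x => hardy h (c :: ℓ) (h x)
  | 0 :: ℓ, x =>
    match hs : splitNZ ℓ with
    | none => x
    | some (k, c, r) => hardy h (List.replicate k 0 ++ (x+1) :: c :: r) x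
  termination_by ℓ _ => toOrd ℓ
  decreasing_by
  · exact toOrd_succ_lt c ℓ
  · rw [splitNZ_eq hs]; exact toOrd_limit_lt x k c r

/-- The Cichoń hierarchy `h_α` relative to `h`:  `h_0(x) = 0`,
`h_{α+1}(x) = 1 + h_α(h x)`, `h_λ(x) = h_{λ(x)}(x)`. -/
def cichon (h : ℕ → ℕ) : List ℕ → ℕ → ℕ
  | [], _ => 0
  | (c+1) :: ℓ, x => 1 + cichon h (c :: ℓ) (h x)
  | 0 :: ℓ, x =>
    match hs : splitNZ ℓ with
    | none => 0
    | some (k, c, r) => cichon h (List.replicate k 0 ++ (x+1) :: c :: r) x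
  termination_by ℓ _ => toOrd ℓ
  decreasing_by
  · exact toOrd_succ_lt c ℓ
  · rw [splitNZ_eq hs]; exact toOrd_limit_lt x k c r

/-- An ordinal index `≤ ω^ω`: either `α < ω^ω` given by its CNF coefficient list,
or `ω^ω` itself (represented by `none`). -/
abbrev OrdIdx := Option (List ℕ)

/-- the CNF coefficient list of `ω^k` -/
def omegaPow (k : ℕ) : List ℕ := List.replicate k 0 ++ [1]

/-- Hardy hierarchy for indices `α ≤ ω^ω`, using `ω^ω(x) = ω^{x+1}`. -/
def hardyTop (h : ℕ → ℕ) : OrdIdx → ℕ → ℕ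
  | some ℓ, x => hardy h ℓ x
  | none, x => hardy h (omegaPow (x+1)) x

/-- Cichoń hierarchy for indices `α ≤ ω^ω`. -/
def cichonTop (h : ℕ → ℕ) : OrdIdx → ℕ → ℕ
  | some ℓ, x => cichon h ℓ x
  | none, x => cichon h (omegaPow (x+1)) x

end HardyCNF

namespace HardyCNF

/-- Pointwise addition of little-endian CNF coefficient lists.  When every exponent
(with nonzero coefficient) of `a` is at least every exponent of `b`, this is the
CNF coefficient list of the ordinal sum `α + β`. -/
def addCNF : List ℕ → List ℕ → List ℕ
  | [], b => b
  | a, [] => a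
  | x :: xs, y :: ys => (x + y) :: addCNF xs ys

end HardyCNF

/-! Induction on `β`. Successors are immediate, and trailing zero coefficients do not change
`h^α`. If `β` is a limit with lowest exponent `k + 1`, the Cantor normal form condition forces the
coefficients of `α` below `k + 1` to vanish, so `α + β` is a limit as well, with fundamental
sequence `(α + β)(x) = α + β(x)`; the induction hypothesis at `β(x)` closes the case. -/

namespace HardyCNF

open List

theorem eq_replicate_zero_or_eq_replicate_zero_append (l : List ℕ) :
    (∃ m, l = replicate m 0) ∨ ∃ k c r, l = replicate k 0 ++ (c + 1) :: r := by
  induction l with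
  | nil => exact .inl ⟨0, rfl⟩
  | cons d t ih =>
    cases d with
    | succ c => exact .inr ⟨0, c, t, rfl⟩
    | zero =>
      rcases ih with ⟨m, rfl⟩ | ⟨k, c, r, rfl⟩
      · exact .inl ⟨m + 1, rfl⟩
      · exact .inr ⟨k + 1, c, r, rfl⟩

/-- Transfinite induction below `ω^ω` in coefficient lists: zero, successor, and limits through
their fundamental sequences. -/
@[elab_as_elim]
theorem limit_induction {motive : List ℕ → Prop}
    (zero : ∀ m, motive (replicate m 0))
    (succ : ∀ c r, motive (c :: r) → motive ((c + 1) :: r))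
    (limit : ∀ k c r, (∀ x, motive (replicate k 0 ++ (x + 1) :: c :: r)) →
      motive (replicate (k + 1) 0 ++ (c + 1) :: r))
    (l : List ℕ) : motive l := by
  rcases eq_replicate_zero_or_eq_replicate_zero_append l with ⟨m, hl⟩ | ⟨k, c, r, hl⟩
  · exact hl ▸ zero m
  · cases k with
    | zero => exact hl ▸ succ c r (limit_induction zero succ limit (c :: r))
    | succ k => exact hl ▸ limit k c r fun x => limit_induction zero succ limit _
termination_by toOrd l
decreasing_by
  · subst hl; exact toOrd_succ_lt c r
  · subst hl; exact toOrd_limit_lt x k c r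

theorem splitNZ_replicate_zero (m : ℕ) : splitNZ (replicate m 0) = none := by
  induction m with
  | zero => rfl
  | succ m ih => simp [replicate_succ, splitNZ, ih]

theorem splitNZ_replicate_zero_append (k c : ℕ) (r : List ℕ) :
    splitNZ (replicate k 0 ++ (c + 1) :: r) = some (k, c, r) := by
  induction k with
  | zero => rfl
  | succ k ih => simp [replicate_succ, splitNZ, ih]

theorem addCNF_cons_right (a : List ℕ) (y : ℕ) (t : List ℕ) :
    addCNF a (y :: t) = (a.getD 0 0 + y) :: addCNF a.tail t := by
  cases a <;> simp [addCNF]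

theorem addCNF_replicate_zero (a : List ℕ) (m : ℕ) :
    addCNF a (replicate m 0) = a ++ replicate (m - a.length) 0 := by
  induction a generalizing m with
  | nil => simp [addCNF]
  | cons d a ih => cases m <;> simp [addCNF, replicate_succ, ih]

theorem addCNF_replicate_zero_append (k : ℕ) (a : List ℕ) (ha : ∀ i < k, a.getD i 0 = 0)
    (y : ℕ) (t : List ℕ) :
    addCNF a (replicate k 0 ++ y :: t) =
      replicate k 0 ++ (a.getD k 0 + y) :: addCNF (a.drop (k + 1)) t := by
  induction k generalizing a with
  | zero => simp [addCNF_cons_right]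
  | succ k ih =>
    cases a with
    | nil => simp [addCNF]
    | cons d a =>
      obtain rfl : d = 0 := ha 0 (by omega)
      simp [replicate_succ, addCNF, ih a fun i hi => ha (i + 1) (by omega)]

section Hardy

variable (h : ℕ → ℕ)

theorem hardy_replicate_zero (m x : ℕ) : hardy h (replicate m 0) x = x := by
  cases m with
  | zero => rw [replicate_zero, hardy]
  | succ m => rw [replicate_succ, hardy, splitNZ_replicate_zero]

theorem hardy_succ (c : ℕ) (r : List ℕ) (x : ℕ) :
    hardy h ((c + 1) :: r) x = hardy h (c :: r) (h x) := by
  rw [hardy]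

theorem hardy_limit (k c : ℕ) (r : List ℕ) (x : ℕ) :
    hardy h (replicate (k + 1) 0 ++ (c + 1) :: r) x =
      hardy h (replicate k 0 ++ (x + 1) :: c :: r) x := by
  rw [replicate_succ, cons_append, hardy, splitNZ_replicate_zero_append]

theorem hardy_append_replicate_zero (m : ℕ) (a : List ℕ) (x : ℕ) :
    hardy h (a ++ replicate m 0) x = hardy h a x := by
  induction a using limit_induction generalizing x with
  | zero n => rw [← replicate_add, hardy_replicate_zero, hardy_replicate_zero]
  | succ c r ih => rw [cons_append, hardy_succ, hardy_succ, ← cons_append, ih]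
  | limit k c r ih =>
    rw [append_assoc, cons_append, hardy_limit, hardy_limit, ← ih x x]
    simp

theorem hardy_addCNF_replicate_zero (a : List ℕ) (m x : ℕ) :
    hardy h (addCNF a (replicate m 0)) x = hardy h a x := by
  rw [addCNF_replicate_zero, hardy_append_replicate_zero]

theorem hardy_addCNF_succ (a : List ℕ) (c : ℕ) (r : List ℕ) (x : ℕ) :
    hardy h (addCNF a ((c + 1) :: r)) x = hardy h (addCNF a (c :: r)) (h x) := by
  rw [addCNF_cons_right, addCNF_cons_right, ← add_assoc, hardy_succ]

theorem hardy_addCNF_limit (a : List ℕ) (k c : ℕ) (r : List ℕ) (ha : ∀ i ≤ k, a.getD i 0 = 0)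
    (x : ℕ) :
    hardy h (addCNF a (replicate (k + 1) 0 ++ (c + 1) :: r)) x =
      hardy h (addCNF a (replicate k 0 ++ (x + 1) :: c :: r)) x := by
  rw [addCNF_replicate_zero_append (k + 1) a (fun i hi => ha i (by omega)),
    addCNF_replicate_zero_append k a (fun i hi => ha i hi.le), ha k le_rfl, zero_add,
    addCNF_cons_right, ← add_assoc, hardy_limit]
  simp

end Hardy

/-- `α + β` is in Cantor normal form. -/
def ExponentsDominate (a b : List ℕ) : Prop :=
  ∀ i j, a.getD i 0 ≠ 0 → b.getD j 0 ≠ 0 → j ≤ i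

namespace ExponentsDominate

variable {a b : List ℕ}

theorem getD_eq_zero (hab : ExponentsDominate a b) {i j : ℕ} (hj : b.getD j 0 ≠ 0)
    (hij : i < j) : a.getD i 0 = 0 := by
  by_contra hi
  exact (hab i j hi hj).not_gt hij

theorem mono_right {b' : List ℕ} (hab : ExponentsDominate a b)
    (hb : ∀ j, b'.getD j 0 ≠ 0 → ∃ j', j ≤ j' ∧ b.getD j' 0 ≠ 0) :
    ExponentsDominate a b' := fun i j hi hj =>
  let ⟨_, hjj', hj'⟩ := hb j hj
  hjj'.trans (hab i _ hi hj')

theorem of_succ {c : ℕ} {r : List ℕ} (hab : ExponentsDominate a ((c + 1) :: r)) :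
    ExponentsDominate a (c :: r) :=
  hab.mono_right fun j hj => ⟨j, le_rfl, by cases j <;> simp_all⟩

theorem of_limit {k c : ℕ} {r : List ℕ}
    (hab : ExponentsDominate a (replicate (k + 1) 0 ++ (c + 1) :: r)) (x : ℕ) :
    ExponentsDominate a (replicate k 0 ++ (x + 1) :: c :: r) :=
  hab.mono_right fun j hj => ⟨max j (k + 1), le_max_left _ _, by grind⟩

end ExponentsDominate

end HardyCNF

/-- If `α + β` is in Cantor normal form — i.e. every exponent
occurring (with a nonzero coefficient) in the CNF of `α` is at least every exponent
occurring in the CNF of `β` — then `h^α(h^β(x)) = h^{α+β}(x)` for all `x`,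
for the Hardy hierarchy relative to any `h : ℕ → ℕ`. -/
theorem hardy_comp_of_cnf (h : ℕ → ℕ) (a b : List ℕ)
    (hcnf : ∀ i j : ℕ, a.getD i 0 ≠ 0 → b.getD j 0 ≠ 0 → j ≤ i) (x : ℕ) :
    HardyCNF.hardy h a (HardyCNF.hardy h b x) = HardyCNF.hardy h (HardyCNF.addCNF a b) x := by
  open HardyCNF in
  induction b using limit_induction generalizing x with
  | zero m => rw [hardy_replicate_zero, hardy_addCNF_replicate_zero]
  | succ c r ih => rw [hardy_succ, ih (ExponentsDominate.of_succ hcnf), hardy_addCNF_succ]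
  | limit k c r ih =>
    have ha : ∀ i ≤ k, a.getD i 0 = 0 := fun i hi =>
      ExponentsDominate.getD_eq_zero hcnf (j := k + 1) (by simp) (by omega)
    rw [hardy_limit, ih x (ExponentsDominate.of_limit hcnf x), hardy_addCNF_limit h a k c r ha]
end
end

section
/- Let h : ℕ → ℕ be any function. Then for every ordinal α ≤ ω^ω and every x ∈ ℕ, h^{h_α(x)}(x) = h^α(x); that is, the h_α(x)-th finite iterate of h applied to x equals the Hardy function h^α applied to x. -/
noncomputable section

/-! Both hierarchies unfold along the same fundamental sequences; a successor step applies `h`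
once to the argument of `h^α` and adds one to `h_α`, a limit step does neither. Hence `h_α(x)`
counts the applications of `h` performed in evaluating `h^α(x)`, by induction along `α`. -/

namespace HardyCNF

variable (h : ℕ → ℕ)

theorem hardy_succ_cons (c : ℕ) (ℓ : List ℕ) (x : ℕ) :
    hardy h ((c + 1) :: ℓ) x = hardy h (c :: ℓ) (h x) := by
  rw [hardy]

theorem cichon_succ_cons (c : ℕ) (ℓ : List ℕ) (x : ℕ) :
    cichon h ((c + 1) :: ℓ) x = cichon h (c :: ℓ) (h x) + 1 := by
  rw [cichon, Nat.add_comm]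

theorem hardy_zero_cons_of_splitNZ_eq_none {ℓ : List ℕ} (hs : splitNZ ℓ = none) (x : ℕ) :
    hardy h (0 :: ℓ) x = x := by
  rw [hardy]; split <;> simp_all

theorem cichon_zero_cons_of_splitNZ_eq_none {ℓ : List ℕ} (hs : splitNZ ℓ = none) (x : ℕ) :
    cichon h (0 :: ℓ) x = 0 := by
  rw [cichon]; split <;> simp_all

theorem hardy_zero_cons_of_splitNZ_eq_some {ℓ r : List ℕ} {k c : ℕ}
    (hs : splitNZ ℓ = some (k, c, r)) (x : ℕ) :
    hardy h (0 :: ℓ) x = hardy h (List.replicate k 0 ++ (x + 1) :: c :: r) x := by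
  rw [hardy]; split <;> simp_all

theorem cichon_zero_cons_of_splitNZ_eq_some {ℓ r : List ℕ} {k c : ℕ}
    (hs : splitNZ ℓ = some (k, c, r)) (x : ℕ) :
    cichon h (0 :: ℓ) x = cichon h (List.replicate k 0 ++ (x + 1) :: c :: r) x := by
  rw [cichon]; split <;> simp_all

theorem iterate_cichon_eq_hardy : ∀ (ℓ : List ℕ) (x : ℕ), h^[cichon h ℓ x] x = hardy h ℓ x
  | [], x => by rw [cichon, hardy, Function.iterate_zero_apply]
  | (c + 1) :: ℓ, x => by
    rw [cichon_succ_cons, hardy_succ_cons, Function.iterate_succ_apply,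
      iterate_cichon_eq_hardy (c :: ℓ) (h x)]
  | 0 :: ℓ, x => by
    match hs : splitNZ ℓ with
    | none =>
      rw [cichon_zero_cons_of_splitNZ_eq_none h hs, hardy_zero_cons_of_splitNZ_eq_none h hs,
        Function.iterate_zero_apply]
    | some (k, c, r) =>
      rw [cichon_zero_cons_of_splitNZ_eq_some h hs, hardy_zero_cons_of_splitNZ_eq_some h hs]
      exact iterate_cichon_eq_hardy _ x
  termination_by ℓ => toOrd ℓ
  decreasing_by
  · exact toOrd_succ_lt c ℓ
  · rw [splitNZ_eq hs]; exact toOrd_limit_lt x k c r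

end HardyCNF

/-- For any `h : ℕ → ℕ`, any ordinal `α ≤ ω^ω` and any `x`,
the `h_α(x)`-th finite iterate of `h` applied to `x` equals `h^α(x)`:
`h^{h_α(x)}(x) = h^α(x)`. -/
theorem hardy_eq_iterate_cichon (h : ℕ → ℕ) (α : HardyCNF.OrdIdx) (x : ℕ) :
    h^[HardyCNF.cichonTop h α x] x = HardyCNF.hardyTop h α x := by
  cases α <;> exact HardyCNF.iterate_cichon_eq_hardy h _ x
end
end

section
/- Let H : ℕ → ℕ be the successor function H(x) = x + 1. Then for every ordinal α ≤ ω^ω and every x ∈ ℕ, H^α(x) = H_α(x) + x, where (H^α) and (H_α) are respectively the Hardy and Cichoń hierarchies relative to H. -/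
noncomputable section

namespace HardyCNF

open Ordinal

/- The Cichoń hierarchy follows the recursion of the Hardy hierarchy, counting the calls
to `h` instead of performing them, so `h^α(x)` is `h` iterated `h_α(x)` times on `x`.
For the successor function, iterating `n` times adds `n`. -/

theorem hardy_eq_iterate_cichon (h : ℕ → ℕ) (ℓ : List ℕ) (x : ℕ) :
    hardy h ℓ x = h^[cichon h ℓ x] x := by
  match ℓ with
  | [] => simp [hardy, cichon]
  | (c+1) :: ℓ =>
    rw [hardy, cichon, hardy_eq_iterate_cichon h (c :: ℓ) (h x), Nat.add_comm,
      Function.iterate_succ_apply]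
  | 0 :: ℓ =>
    rw [hardy, cichon]
    match hs : splitNZ ℓ with
    | none => rfl
    | some (k, c, r) => exact hardy_eq_iterate_cichon h _ x
  termination_by toOrd ℓ
  decreasing_by
  · exact toOrd_succ_lt c ℓ
  · rw [splitNZ_eq hs]; exact toOrd_limit_lt x k c r

theorem hardyTop_eq_iterate_cichonTop (h : ℕ → ℕ) (α : OrdIdx) (x : ℕ) :
    hardyTop h α x = h^[cichonTop h α x] x := by
  cases α <;> exact hardy_eq_iterate_cichon h _ x

end HardyCNF

/-- For the successor function `H(x) = x + 1` and every `α ≤ ω^ω`,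
`H^α(x) = H_α(x) + x`, relating the Hardy and Cichoń hierarchies relative to `H`. -/
theorem hardy_eq_cichon_add_self_succ (α : HardyCNF.OrdIdx) (x : ℕ) :
    HardyCNF.hardyTop (fun t => t + 1) α x = HardyCNF.cichonTop (fun t => t + 1) α x + x := by
  rw [HardyCNF.hardyTop_eq_iterate_cichonTop]
  exact (Nat.succ_iterate x _).trans (Nat.add_comm _ _)
end
end
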